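/- Let G be a GHZ multigraph with a 2-vertex cut {u,v} separating A (odd size) from B. Then w(2_A 1_u)·w(2_B 1_v)·w(2_A 1_v)·w(2_B 1_u) = 0, where 1 and 2 are any two colours whose monochromatic vertex colourings have weight 1. Combined with the preceding nonvanishing statement, this yields a contradiction when there are three feasible monochromatic colourings. -/

import Mathlib

open scoped Classical

/-- An edge-coloured edge-weighted multigraph (no self-loops) on vertex set `V`.
Each edge `e` has two endpoints `fst e`, `snd e`, a colour on each of its two
half-edges (`cf e` at `fst e`, `cs e` at `snd e`) and a complex weight `w e`. -/
structure EMG (V : Type) [Fintype V] [DecidableEq V] where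
  E : Type
  [fintypeE : Fintype E]
  fst : E → V
  snd : E → V
  noLoop : ∀ e, fst e ≠ snd e
  cf : E → ℕ
  cs : E → ℕ
  w : E → ℂ

namespace EMG

attribute [instance] EMG.fintypeE

variable {V : Type} [Fintype V] [DecidableEq V] (G : EMG V)

/-- `e` is incident to vertex `x`. -/
def inc (e : G.E) (x : V) : Prop := G.fst e = x ∨ G.snd e = x

/-- `M` is a perfect matching of the induced subgraph on `S`: all edges of `M`
lie inside `S` and every vertex of `S` is covered exactly once. -/
def IsPMOn (S : Finset V) (M : Finset G.E) : Prop :=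
  (∀ e ∈ M, G.fst e ∈ S ∧ G.snd e ∈ S) ∧ ∀ x ∈ S, ∃! e, e ∈ M ∧ G.inc e x

/-- `M` is a perfect matching of `G`. -/
def IsPM (M : Finset G.E) : Prop := G.IsPMOn Finset.univ M

/-- `M` induces the vertex colouring `vc`: every edge of `M` survives the
filtering by `vc` (half-edge colours agree with the endpoint colours). -/
def Induces (M : Finset G.E) (vc : V → ℕ) : Prop :=
  ∀ e ∈ M, G.cf e = vc (G.fst e) ∧ G.cs e = vc (G.snd e)

/-- The weight of the vertex colouring `vc` on the induced subgraph on `S`: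
the sum over perfect matchings of the filtered subgraph of the products of
edge weights. -/
noncomputable def wcolOn (S : Finset V) (vc : V → ℕ) : ℂ :=
  ∑ M ∈ Finset.univ.filter (fun M => G.IsPMOn S M ∧ G.Induces M vc),
    ∏ e ∈ M, G.w e

/-- The weight of the vertex colouring `vc` in `G`. -/
noncomputable def wcol (vc : V → ℕ) : ℂ := G.wcolOn Finset.univ vc

/-- `vc` is feasible: the subgraph filtered by `vc` has a perfect matching. -/
def Feasible (vc : V → ℕ) : Prop := ∃ M, G.IsPM M ∧ G.Induces M vc

/-- `G` is a GHZ graph: all feasible monochromatic vertex colourings have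
weight `1` and all non-monochromatic vertex colourings have weight `0`. -/
def IsGHZ : Prop :=
  (∀ i : ℕ, G.Feasible (fun _ => i) → G.wcol (fun _ => i) = 1) ∧
  (∀ vc : V → ℕ, (¬ ∃ i : ℕ, ∀ x, vc x = i) → G.wcol vc = 0)

/-- `G` is a g-GHZ graph: all feasible monochromatic vertex colourings have
non-zero weight and all non-monochromatic vertex colourings have weight `0`. -/
def IsgGHZ : Prop :=
  (∀ i : ℕ, G.Feasible (fun _ => i) → G.wcol (fun _ => i) ≠ 0) ∧
  (∀ vc : V → ℕ, (¬ ∃ i : ℕ, ∀ x, vc x = i) → G.wcol vc = 0)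

/-- The dimension: the number of feasible monochromatic vertex colourings. -/
noncomputable def dimension : ℕ := Set.ncard {i : ℕ | G.Feasible (fun _ => i)}

/-- The skeleton of `G`: its underlying simple graph. -/
def skeleton : SimpleGraph V where
  Adj a b := a ≠ b ∧ ∃ e : G.E, (G.fst e = a ∧ G.snd e = b) ∨ (G.fst e = b ∧ G.snd e = a)
  symm := by
    constructor
    intro a b h
    refine ⟨h.1.symm, ?_⟩
    obtain ⟨e, he⟩ := h.2
    exact ⟨e, he.symm⟩
  loopless := by constructor; intro a h; exact h.1 rfl

/-- Replace the weight function of `G`. -/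
def reweight (w' : G.E → ℂ) : EMG V := { G with w := w' }

/-- Delete the edges in `D` from `G`. -/
noncomputable def deleteEdges (D : Finset G.E) : EMG V where
  E := {e : G.E // e ∉ D}
  fst e := G.fst e.1
  snd e := G.snd e.1
  noLoop e := G.noLoop e.1
  cf e := G.cf e.1
  cs e := G.cs e.1
  w e := G.w e.1

/-- `M` is a monochromatic perfect matching of colour `i` (as a set of coloured
edges: all half-edges of `M` carry colour `i`). -/
def MonoPM (M : Finset G.E) (i : ℕ) : Prop :=
  ∀ e ∈ M, G.cf e = i ∧ G.cs e = i

/-- Both endpoints of `e` lie in `S`. -/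
def bothIn (S : Finset V) (e : G.E) : Prop := G.fst e ∈ S ∧ G.snd e ∈ S

/-- `e` joins a vertex of `S` to the vertex `x`. -/
def connectsTo (S : Finset V) (x : V) (e : G.E) : Prop :=
  (G.fst e ∈ S ∧ G.snd e = x) ∨ (G.snd e ∈ S ∧ G.fst e = x)

end EMG

/-- The matching index of a simple graph `H`: the maximum dimension over all
GHZ edge-coloured edge-weighted multigraphs whose skeleton is `H`. -/
noncomputable def matchingIndex {V : Type} [Fintype V] [DecidableEq V]
    (H : SimpleGraph V) : ℕ :=
  sSup {d : ℕ | ∃ G : EMG V, G.skeleton = H ∧ G.IsGHZ ∧ G.dimension = d}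

/-! Every perfect matching of `G` contains exactly one edge leaving the odd side `A`, and that
edge ends in `u` or in `v`. Hence the perfect matchings of `G` split into those of `A + u`
and `B + v` and those of `A + v` and `B + u`, and for every colouring `c`
`w(c) = w(c on A + u) w(c on B + v) + w(c on A + v) w(c on B + u)`.
Applied to the colourings that give `u` and `v` the colours `(1,2)`, `(2,1)`, `(2,2)` and
`(1,1)` and colour `2` everywhere else, this gives three vanishing identities and one equal
to `1`; together they force `w(2_A 1_u) w(2_B 1_v) = 0`. -/

namespace EMG

variable {V : Type} [Fintype V] [DecidableEq V]

variable (G : EMG V) in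
def SplitsAlong (S T : Finset V) (M : Finset G.E) : Prop :=
  ∀ e ∈ M, G.bothIn S e ∨ G.bothIn T e

variable (G : EMG V) in
structure IsOddTwoCut (u v : V) (A B : Finset V) : Prop where
  ne : u ≠ v
  disjoint : Disjoint A B
  left_notMem : u ∉ A ∧ u ∉ B
  right_notMem : v ∉ A ∧ v ∉ B
  cover : ∀ x : V, x ∈ A ∨ x ∈ B ∨ x = u ∨ x = v
  sep : ∀ e : G.E, ¬ (G.fst e ∈ A ∧ G.snd e ∈ B) ∧ ¬ (G.fst e ∈ B ∧ G.snd e ∈ A)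
  odd_card : Odd A.card

variable {G : EMG V} {S T : Finset V} {M M₁ M₂ : Finset G.E} {e : G.E} {x : V}

theorem inc_iff_mem_pair : G.inc e x ↔ x ∈ ({G.fst e, G.snd e} : Finset V) := by
  simp [inc, eq_comm]

theorem bothIn.mono (h : G.bothIn S e) (hST : S ⊆ T) : G.bothIn T e :=
  ⟨hST h.1, hST h.2⟩

theorem connectsTo.bothIn (h : G.connectsTo S x e) (hST : S ⊆ T) (hx : x ∈ T) :
    G.bothIn T e := by
  rcases h with ⟨hS, rfl⟩ | ⟨hS, rfl⟩
  exacts [⟨hST hS, hx⟩, ⟨hx, hST hS⟩]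

theorem inc_of_connectsTo (h : G.connectsTo S x e) : G.inc e x := by
  rcases h with ⟨-, h⟩ | ⟨-, h⟩
  exacts [Or.inr h, Or.inl h]

theorem fst_mem_or_snd_mem_of_inc (hxe : G.inc e x) (hx : x ∈ S) :
    G.fst e ∈ S ∨ G.snd e ∈ S := by
  rcases hxe with rfl | rfl
  exacts [Or.inl hx, Or.inr hx]

theorem bothIn.mem_of_inc (h : G.bothIn S e) (hx : G.inc e x) : x ∈ S := by
  rcases hx with rfl | rfl
  exacts [h.1, h.2]

theorem IsPMOn.mem_of_inc (h : G.IsPMOn S M) (he : e ∈ M) (hx : G.inc e x) : x ∈ S :=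
  bothIn.mem_of_inc (h.1 e he) hx

theorem IsPMOn.eq_of_inc (h : G.IsPMOn S M) (hx : x ∈ S) {f : G.E} (he : e ∈ M) (hf : f ∈ M)
    (hex : G.inc e x) (hfx : G.inc f x) : e = f :=
  (h.2 x hx).unique ⟨he, hex⟩ ⟨hf, hfx⟩

theorem IsPMOn.card_eq (h : G.IsPMOn S M) : S.card = 2 * M.card := by
  have hS : S = M.biUnion fun e => {G.fst e, G.snd e} := by
    ext x
    simp only [Finset.mem_biUnion, ← inc_iff_mem_pair]
    exact ⟨fun hx => (h.2 x hx).exists, fun ⟨e, he, hx⟩ => h.mem_of_inc he hx⟩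
  rw [hS, Finset.card_biUnion, Finset.sum_const_nat fun e _ => Finset.card_pair (G.noLoop e),
    mul_comm]
  intro e he f hf hef
  refine Finset.disjoint_left.mpr fun x hxe hxf => hef ?_
  rw [← inc_iff_mem_pair] at hxe hxf
  exact h.eq_of_inc (h.mem_of_inc he hxe) he hf hxe hxf

theorem IsPMOn.even_card (h : G.IsPMOn S M) : Even S.card :=
  ⟨M.card, by rw [h.card_eq, two_mul]⟩

theorem IsPMOn.filter_bothIn (h : G.IsPMOn S M) (hTS : T ⊆ S)
    (hT : ∀ e ∈ M, ∀ x ∈ T, G.inc e x → G.bothIn T e) :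
    G.IsPMOn T (M.filter (G.bothIn T)) := by
  refine ⟨fun e he => (Finset.mem_filter.mp he).2, fun x hx => ?_⟩
  obtain ⟨e, ⟨he, hxe⟩, huniq⟩ := h.2 x (hTS hx)
  exact ⟨e, ⟨Finset.mem_filter.mpr ⟨he, hT e he x hx hxe⟩, hxe⟩,
    fun f ⟨hf, hxf⟩ => huniq f ⟨(Finset.mem_filter.mp hf).1, hxf⟩⟩

theorem IsPMOn.disjoint (hST : Disjoint S T) (h₁ : G.IsPMOn S M₁) (h₂ : G.IsPMOn T M₂) :
    Disjoint M₁ M₂ :=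
  Finset.disjoint_left.mpr fun e he₁ he₂ =>
    Finset.disjoint_left.mp hST (h₁.1 e he₁).1 (h₂.1 e he₂).1

theorem IsPMOn.existsUnique_inc_union (hST : Disjoint S T) (h₁ : G.IsPMOn S M₁)
    (h₂ : G.IsPMOn T M₂) (hx : x ∈ S) : ∃! e, e ∈ M₁ ∪ M₂ ∧ G.inc e x := by
  obtain ⟨e, ⟨he, hxe⟩, huniq⟩ := h₁.2 x hx
  refine ⟨e, ⟨Finset.mem_union_left _ he, hxe⟩, fun f ⟨hf, hxf⟩ => ?_⟩
  rcases Finset.mem_union.mp hf with hf | hf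
  · exact huniq f ⟨hf, hxf⟩
  · exact absurd (h₂.mem_of_inc hf hxf) (Finset.disjoint_left.mp hST hx)

theorem IsPMOn.union (hST : Disjoint S T) (h₁ : G.IsPMOn S M₁) (h₂ : G.IsPMOn T M₂) :
    G.IsPMOn (S ∪ T) (M₁ ∪ M₂) := by
  refine ⟨fun e he => ?_, fun x hx => ?_⟩
  · rcases Finset.mem_union.mp he with he | he
    exacts [bothIn.mono (h₁.1 e he) Finset.subset_union_left,
      bothIn.mono (h₂.1 e he) Finset.subset_union_right]
  · rcases Finset.mem_union.mp hx with hx | hx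
    · exact h₁.existsUnique_inc_union hST h₂ hx
    · simpa only [Finset.union_comm M₁] using h₂.existsUnique_inc_union hST.symm h₁ hx

theorem IsPMOn.filter_bothIn_union (hST : Disjoint S T) (h₁ : G.IsPMOn S M₁)
    (h₂ : G.IsPMOn T M₂) : (M₁ ∪ M₂).filter (G.bothIn S) = M₁ := by
  rw [Finset.filter_union, Finset.filter_true_of_mem (p := G.bothIn S) fun e he => h₁.1 e he,
    Finset.filter_false_of_mem fun e he hS => Finset.disjoint_left.mp hST hS.1 (h₂.1 e he).1,
    Finset.union_empty]

theorem wcolOn_congr {vc vc' : V → ℕ} (h : ∀ x ∈ S, vc x = vc' x) :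
    G.wcolOn S vc = G.wcolOn S vc' := by
  refine Finset.sum_congr (Finset.filter_congr fun M _ => and_congr_right fun hM => ?_)
    fun _ _ => rfl
  refine forall₂_congr fun e he => ?_
  rw [h _ (hM.1 e he).1, h _ (hM.1 e he).2]

theorem wcolOn_mul_wcolOn (hST : Disjoint S T) (vc : V → ℕ) :
    G.wcolOn S vc * G.wcolOn T vc =
      ∑ M ∈ Finset.univ.filter
          (fun M => (G.IsPMOn (S ∪ T) M ∧ G.Induces M vc) ∧ G.SplitsAlong S T M),
        ∏ e ∈ M, G.w e := by
  simp only [wcolOn]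
  rw [Finset.sum_mul_sum, ← Finset.sum_product']
  refine Finset.sum_nbij' (fun p => p.1 ∪ p.2)
    (fun M => (M.filter (G.bothIn S), M.filter (G.bothIn T))) ?_ ?_ ?_ ?_ ?_
  · rintro ⟨M₁, M₂⟩ hp
    simp only [Finset.mem_product, Finset.mem_filter, Finset.mem_univ, true_and] at hp ⊢
    obtain ⟨⟨h₁, hc₁⟩, h₂, hc₂⟩ := hp
    refine ⟨⟨h₁.union hST h₂, fun e he => ?_⟩, fun e he => ?_⟩ <;>
      rcases Finset.mem_union.mp he with he | he
    exacts [hc₁ e he, hc₂ e he, Or.inl (h₁.1 e he), Or.inr (h₂.1 e he)]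
  · intro M hM
    simp only [Finset.mem_product, Finset.mem_filter, Finset.mem_univ, true_and] at hM ⊢
    obtain ⟨⟨h, hc⟩, hsplit⟩ := hM
    refine ⟨⟨h.filter_bothIn Finset.subset_union_left fun e he x hx hxe => ?_,
      fun e he => hc e (Finset.mem_filter.mp he).1⟩,
      h.filter_bothIn Finset.subset_union_right fun e he x hx hxe => ?_,
      fun e he => hc e (Finset.mem_filter.mp he).1⟩
    · exact (hsplit e he).resolve_right fun hT =>
        Finset.disjoint_left.mp hST hx (bothIn.mem_of_inc hT hxe)
    · exact (hsplit e he).resolve_left fun hS =>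
        Finset.disjoint_right.mp hST hx (bothIn.mem_of_inc hS hxe)
  · rintro ⟨M₁, M₂⟩ hp
    simp only [Finset.mem_product, Finset.mem_filter, Finset.mem_univ, true_and] at hp
    rw [hp.1.1.filter_bothIn_union hST hp.2.1, Finset.union_comm,
      hp.2.1.filter_bothIn_union hST.symm hp.1.1]
  · intro M hM
    simp only [Finset.mem_filter, Finset.mem_univ, true_and] at hM
    rw [← Finset.filter_or, Finset.filter_true_of_mem hM.2]
  · rintro ⟨M₁, M₂⟩ hp
    simp only [Finset.mem_product, Finset.mem_filter, Finset.mem_univ, true_and] at hp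
    exact (Finset.prod_union (hp.1.1.disjoint hST hp.2.1)).symm

namespace IsOddTwoCut

variable {u v : V} {A B : Finset V}

theorem symm (hc : G.IsOddTwoCut u v A B) : G.IsOddTwoCut v u A B where
  ne := hc.ne.symm
  disjoint := hc.disjoint
  left_notMem := hc.right_notMem
  right_notMem := hc.left_notMem
  cover x := by have := hc.cover x; tauto
  sep := hc.sep
  odd_card := hc.odd_card

theorem disjoint_insert (hc : G.IsOddTwoCut u v A B) : Disjoint (insert u A) (insert v B) := by
  simp [hc.ne.symm, hc.left_notMem.2, hc.right_notMem.1, hc.disjoint]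

theorem insert_union_insert (hc : G.IsOddTwoCut u v A B) :
    insert u A ∪ insert v B = Finset.univ :=
  Finset.eq_univ_of_forall fun x => by
    rcases hc.cover x with h | h | rfl | rfl <;> simp [*]

theorem bothIn_or_connectsTo (hc : G.IsOddTwoCut u v A B) (he : G.fst e ∈ A ∨ G.snd e ∈ A) :
    G.bothIn A e ∨ G.connectsTo A u e ∨ G.connectsTo A v e := by
  have := hc.sep e
  have := hc.cover (G.fst e)
  have := hc.cover (G.snd e)
  unfold bothIn connectsTo
  tauto

theorem exists_connectsTo (hc : G.IsOddTwoCut u v A B) (hM : G.IsPM M) :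
    (∃ e ∈ M, G.connectsTo A u e) ∨ ∃ e ∈ M, G.connectsTo A v e := by
  -- otherwise `M` restricts to a perfect matching of the odd set `A`
  by_contra! h
  have hA := hM.filter_bothIn (Finset.subset_univ A) fun e he x hx hxe => ?_
  · exact Nat.not_even_iff_odd.mpr hc.odd_card hA.even_card
  · rcases hc.bothIn_or_connectsTo (fst_mem_or_snd_mem_of_inc hxe hx) with h' | h' | h'
    exacts [h', absurd h' (h.1 e he), absurd h' (h.2 e he)]

theorem not_connectsTo_and (hc : G.IsOddTwoCut u v A B) (hM : G.IsPM M) :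
    ¬((∃ e ∈ M, G.connectsTo A u e) ∧ ∃ e ∈ M, G.connectsTo A v e) := by
  -- otherwise `M` restricts to a perfect matching of the odd set `A + u + v`
  rintro ⟨⟨e₁, he₁, hu⟩, e₂, he₂, hv⟩
  have hAT : A ⊆ insert u (insert v A) :=
    (Finset.subset_insert v A).trans (Finset.subset_insert u _)
  have hT := hM.filter_bothIn (Finset.subset_univ (insert u (insert v A)))
    fun e he x hx hxe => ?_
  · have hcard : (insert u (insert v A)).card = A.card + 2 := by
      rw [Finset.card_insert_of_notMem, Finset.card_insert_of_notMem hc.right_notMem.1]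
      simp [hc.ne, hc.left_notMem.1]
    exact Nat.not_even_iff_odd.mpr (hcard ▸ hc.odd_card.add_even even_two) hT.even_card
  · rcases Finset.mem_insert.mp hx with rfl | hx
    · rw [hM.eq_of_inc (Finset.mem_univ x) he he₁ hxe (inc_of_connectsTo hu)]
      exact hu.bothIn hAT (by simp)
    rcases Finset.mem_insert.mp hx with rfl | hx
    · rw [hM.eq_of_inc (Finset.mem_univ x) he he₂ hxe (inc_of_connectsTo hv)]
      exact hv.bothIn hAT (by simp)
    rcases hc.bothIn_or_connectsTo (fst_mem_or_snd_mem_of_inc hxe hx) with h | h | h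
    exacts [h.mono hAT, h.bothIn hAT (by simp), h.bothIn hAT (by simp)]

theorem splitsAlong_iff (hc : G.IsOddTwoCut u v A B) (hM : G.IsPM M) :
    G.SplitsAlong (insert u A) (insert v B) M ↔ ∃ e ∈ M, G.connectsTo A u e := by
  constructor
  · intro hsplit
    obtain ⟨e, ⟨he, hue⟩, -⟩ := hM.2 u (Finset.mem_univ u)
    have heA : G.bothIn (insert u A) e := (hsplit e he).resolve_right fun h => by
      simpa [hc.ne, hc.left_notMem.2] using h.mem_of_inc hue
    have := G.noLoop e
    refine ⟨e, he, ?_⟩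
    simp only [bothIn, connectsTo, inc, Finset.mem_insert] at heA hue ⊢
    grind
  · rintro ⟨e₀, he₀, hu⟩ e he
    have hv : ¬∃ e ∈ M, G.connectsTo A v e := fun hv =>
      hc.not_connectsTo_and hM ⟨⟨e₀, he₀, hu⟩, hv⟩
    by_cases hA : G.fst e ∈ A ∨ G.snd e ∈ A
    · rcases hc.bothIn_or_connectsTo hA with h | h | h
      · exact Or.inl (h.mono (Finset.subset_insert _ _))
      · exact Or.inl (h.bothIn (Finset.subset_insert _ _) (Finset.mem_insert_self _ _))
      · exact absurd ⟨e, he, h⟩ hv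
    · have hue : ¬G.inc e u := fun hue => by
        obtain rfl := hM.eq_of_inc (Finset.mem_univ u) he he₀ hue (inc_of_connectsTo hu)
        rcases hu with ⟨h, -⟩ | ⟨h, -⟩
        exacts [hA (Or.inl h), hA (Or.inr h)]
      have := hc.cover (G.fst e)
      have := hc.cover (G.snd e)
      simp only [bothIn, inc, Finset.mem_insert] at hue ⊢
      tauto

theorem wcol_eq_add (hc : G.IsOddTwoCut u v A B) (vc : V → ℕ) :
    G.wcol vc = G.wcolOn (insert u A) vc * G.wcolOn (insert v B) vc
      + G.wcolOn (insert v A) vc * G.wcolOn (insert u B) vc := by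
  rw [wcolOn_mul_wcolOn hc.disjoint_insert, wcolOn_mul_wcolOn hc.symm.disjoint_insert,
    hc.insert_union_insert, hc.symm.insert_union_insert, wcol, wcolOn,
    ← Finset.sum_filter_add_sum_filter_not _ fun M => ∃ e ∈ M, G.connectsTo A u e,
    Finset.filter_filter, Finset.filter_filter]
  congr 2 <;> refine Finset.filter_congr fun M _ => and_congr_right fun h => ?_
  · exact (hc.splitsAlong_iff h.1).symm
  · rw [hc.symm.splitsAlong_iff h.1]
    have hnand := hc.not_connectsTo_and h.1
    exact ⟨(hc.exists_connectsTo h.1).resolve_left, fun hv hu => hnand ⟨hu, hv⟩⟩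

/-- The identity `w(i_A j_B k_u ℓ_v) = w(i_A k_u) w(j_B ℓ_v) + w(i_A ℓ_v) w(j_B k_u)`. -/
theorem wcol_ite (hc : G.IsOddTwoCut u v A B) (i j k l : ℕ) :
    G.wcol (fun x => if x = u then k else if x = v then l else if x ∈ A then i else j) =
      G.wcolOn (insert u A) (fun x => if x = u then k else i) *
          G.wcolOn (insert v B) (fun x => if x = v then l else j) +
        G.wcolOn (insert v A) (fun x => if x = v then l else i) *
          G.wcolOn (insert u B) (fun x => if x = u then k else j) := by
  have := hc.ne
  have := hc.left_notMem
  have := hc.right_notMem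
  have hAB : ∀ x ∈ A, x ∉ B := fun x hx => Finset.disjoint_left.mp hc.disjoint hx
  rw [hc.wcol_eq_add]
  congr 2 <;> exact wcolOn_congr fun x hx => by grind

end IsOddTwoCut

end EMG

theorem mul_eq_zero_of_cut_relations {R : Type*} [CommRing R] {α β γ δ X Y Z T : R}
    (h₁ : α * T + Y * δ = 0) (h₂ : X * β + γ * Z = 0) (h₃ : X * T + Y * Z = 1)
    (h₄ : α * β + γ * δ = 0) : α * β = 0 := by
  linear_combination (X * β) * h₁ - (Y * δ) * h₂ - (α * β) * h₃ + (Y * Z) * h₄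

theorem stmt9_general {V : Type} [Fintype V] [DecidableEq V] (G : EMG V)
    (u v : V) (huv : u ≠ v)
    (A B : Finset V)
    (hAne : A.Nonempty)
    (hdisj : Disjoint A B)
    (huAB : u ∉ A ∧ u ∉ B) (hvAB : v ∉ A ∧ v ∉ B)
    (hcover : ∀ x : V, x ∈ A ∨ x ∈ B ∨ x = u ∨ x = v)
    (hsep : ∀ e : G.E, ¬ (G.fst e ∈ A ∧ G.snd e ∈ B) ∧ ¬ (G.fst e ∈ B ∧ G.snd e ∈ A))
    (hodd : Odd A.card)
    (hGHZ : G.IsGHZ)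
    (a b : ℕ) (hab : a ≠ b)
    (hwb : G.wcol (fun _ => b) = 1) :
    G.wcolOn (insert u A) (fun x => if x = u then a else b) *
    G.wcolOn (insert v B) (fun x => if x = v then a else b) *
    G.wcolOn (insert v A) (fun x => if x = v then a else b) *
    G.wcolOn (insert u B) (fun x => if x = u then a else b) = 0 := by
  have hc : G.IsOddTwoCut u v A B := ⟨huv, hdisj, huAB, hvAB, hcover, hsep, hodd⟩
  have hzero : ∀ vc : V → ℕ, ∀ y z, vc y ≠ vc z → G.wcol vc = 0 := fun vc y z h =>
    hGHZ.2 vc fun ⟨i, hi⟩ => h ((hi y).trans (hi z).symm)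
  obtain ⟨x, hx⟩ := hAne
  have hxu : x ≠ u := fun h => huAB.1 (h ▸ hx)
  have hxv : x ≠ v := fun h => hvAB.1 (h ▸ hx)
  have h₁ := hc.wcol_ite b b a b
  have h₂ := hc.wcol_ite b b b a
  have h₃ := hc.wcol_ite b b b b
  have h₄ := hc.wcol_ite b b a a
  rw [hzero _ u v (by simp [huv.symm, hab])] at h₁
  rw [hzero _ u v (by simp [huv.symm, hab.symm])] at h₂
  rw [hzero _ u x (by simp [hxu, hxv, hx, hab])] at h₄
  simp only [ite_self] at h₁ h₂ h₃ h₄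
  rw [hwb] at h₃
  rw [mul_eq_zero_of_cut_relations h₁.symm h₂.symm h₃.symm h₄.symm, zero_mul, zero_mul]

/-- In a GHZ multigraph with a 2-cut `{u,v}` separating `A` (odd) from `B`,
for any two distinct colours `a` (playing `1`) and `b` (playing `2`) whose
monochromatic colourings have weight `1`,
`w(b_A a_u)·w(b_B a_v)·w(b_A a_v)·w(b_B a_u) = 0`. -/
theorem stmt9 {V : Type} [Fintype V] [DecidableEq V] (G : EMG V)
    (u v : V) (huv : u ≠ v)
    (A B : Finset V)
    (hAne : A.Nonempty) (hBne : B.Nonempty)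
    (hdisj : Disjoint A B)
    (huAB : u ∉ A ∧ u ∉ B) (hvAB : v ∉ A ∧ v ∉ B)
    (hcover : ∀ x : V, x ∈ A ∨ x ∈ B ∨ x = u ∨ x = v)
    (hsep : ∀ e : G.E, ¬ (G.fst e ∈ A ∧ G.snd e ∈ B) ∧ ¬ (G.fst e ∈ B ∧ G.snd e ∈ A))
    (hodd : Odd A.card)
    (hGHZ : G.IsGHZ)
    (a b : ℕ) (hab : a ≠ b)
    (hwa : G.wcol (fun _ => a) = 1) (hwb : G.wcol (fun _ => b) = 1) :
    G.wcolOn (insert u A) (fun x => if x = u then a else b) *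
    G.wcolOn (insert v B) (fun x => if x = v then a else b) *
    G.wcolOn (insert v A) (fun x => if x = v then a else b) *
    G.wcolOn (insert u B) (fun x => if x = u then a else b) = 0 :=
  stmt9_general G u v huv A B hAne hdisj huAB hvAB hcover hsep hodd hGHZ a b hab hwb
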